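/- Any skew word over {a,b} is eventually periodic but not purely recurrent: if w is a suffix of μ(x^l y x^ω) for some composition μ of the morphisms ψ_a, ψ_b and {x,y} = {a,b}, l ∈ ℕ, but w is not a suffix of μ(x^ω), then w is not recurrent, i.e., some factor of w occurs only finitely often in w. -/

import Mathlib

/-! A nonerasing morphism `μ` sends `x^l y x^ω` to `q p^ω` and `x^ω` to `p^ω`, where `p = μ(x)`
is nonempty. A suffix `w` of `q p^ω` is therefore `|p|`-periodic from some position `M` on. If the
prefix of `w` of length `M + |p|` occurred again at a position `≥ M`, the periodicity would
propagate back to the start of `w`, so `w` would be purely periodic and hence a suffix of `p^ω`. -/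

/-- The morphism ψ_a on {a,b}*: a ↦ a, b ↦ ab, extended to lists. -/
def psiA {A : Type*} [DecidableEq A] (a b : A) : List A → List A :=
  fun l => l.flatMap (fun c => if c = a then [a] else [a, b])

/-- The morphism ψ_b on {a,b}*: a ↦ ba, b ↦ b, extended to lists. -/
def psiB {A : Type*} [DecidableEq A] (a b : A) : List A → List A :=
  fun l => l.flatMap (fun c => if c = b then [b] else [b, a])

/-- `s` is the image of the infinite word `w` under the (list) morphism `μ`:
every image of a finite prefix of `w` is a prefix of `s`. -/
def IsInfImage {A : Type*} [Inhabited A] (μ : List A → List A) (w s : ℕ → A) : Prop :=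
  ∀ n : ℕ, ∀ k < (μ (List.ofFn (fun i : Fin n => w i))).length,
    (μ (List.ofFn (fun i : Fin n => w i)))[k]! = s k

/-- `u` occurs in the infinite word `w` at position `i`. -/
def OccursAt {A : Type*} (u : List A) (w : ℕ → A) (i : ℕ) : Prop :=
  u = List.ofFn (fun k : Fin u.length => w (i + (k : ℕ)))

/-- `u` is a (finite) factor of the infinite word `w`. -/
def InfFactor {A : Type*} (u : List A) (w : ℕ → A) : Prop := ∃ i, OccursAt u w i

section Morphisms

variable {A : Type*}

lemma length_le_length_flatMap {g : A → List A} {u : List A} (hu : ∀ c ∈ u, g c ≠ []) :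
    u.length ≤ (u.flatMap g).length := by
  rw [List.length_flatMap]
  simpa using List.length_le_sum_of_one_le (u.map fun c => (g c).length)
    (by simpa [Nat.one_le_iff_ne_zero] using hu)

lemma exists_flatMap_eq_foldr_comp (Ms : List (List A → List A))
    (hMs : ∀ M ∈ Ms, ∃ f : A → List A, (∀ c, f c ≠ []) ∧ M = (·.flatMap f)) :
    ∃ g : A → List A, (∀ c, g c ≠ []) ∧ Ms.foldr (· ∘ ·) id = (·.flatMap g) := by
  induction Ms with
  | nil => exact ⟨fun c => [c], by simp, funext fun u => by simp⟩
  | cons M Ms ih =>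
    obtain ⟨f, hf, rfl⟩ := hMs M List.mem_cons_self
    obtain ⟨g, hg, hMs⟩ := ih fun M' hM' => hMs M' (List.mem_cons_of_mem _ hM')
    refine ⟨fun c => (g c).flatMap f, fun c h => ?_, ?_⟩
    · obtain ⟨d, hd⟩ := List.exists_mem_of_ne_nil _ (hg c)
      exact hf d (List.flatMap_eq_nil_iff.mp h d hd)
    · funext u
      simp [hMs, List.flatMap_assoc]

variable [DecidableEq A]

lemma exists_flatMap_eq_foldr_psi (a b : A) (L : List Bool) :
    ∃ g : A → List A, (∀ c, g c ≠ []) ∧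
      (L.map fun t => if t then psiA a b else psiB a b).foldr (· ∘ ·) id = (·.flatMap g) := by
  refine exists_flatMap_eq_foldr_comp _ fun M hM => ?_
  obtain ⟨_ | _, -, rfl⟩ := List.mem_map.mp hM
  · exact ⟨fun c => if c = b then [b] else [b, a],
      fun c => by by_cases h : c = b <;> simp [h], rfl⟩
  · exact ⟨fun c => if c = a then [a] else [a, b],
      fun c => by by_cases h : c = a <;> simp [h], rfl⟩

end Morphisms

section InfiniteImages

variable {A : Type*} [Inhabited A] {g : A → List A}

lemma IsInfImage.unique {w s s' : ℕ → A} (hw : ∀ n, g (w n) ≠ [])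
    (hs : IsInfImage (·.flatMap g) w s) (hs' : IsInfImage (·.flatMap g) w s') : s = s' := by
  funext k
  have hk : k < ((List.ofFn fun i : Fin (k + 1) => w i).flatMap g).length :=
    lt_of_lt_of_le (by simp) (length_le_length_flatMap (by simp [List.mem_ofFn, hw]))
  rw [← hs _ k hk, hs' _ k hk]

lemma IsInfImage.shift {w s : ℕ → A} (hs : IsInfImage (·.flatMap g) w s) (j : ℕ) :
    IsInfImage (·.flatMap g) (fun n => w (j + n))
      (fun n => s (((List.ofFn fun i : Fin j => w i).flatMap g).length + n)) := by
  intro n k hk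
  set p := (List.ofFn fun i : Fin j => w i).flatMap g
  set q := (List.ofFn fun i : Fin n => w (j + i)).flatMap g
  have hsplit : (List.ofFn fun i : Fin (j + n) => w i).flatMap g = p ++ q := by
    rw [List.ofFn_add, List.flatMap_append]
    rfl
  change k < q.length at hk
  have hk' : p.length + k < (p ++ q).length := by simp only [List.length_append]; omega
  have := hs (j + n) (p.length + k)
  simp only [hsplit] at this ⊢
  rw [← this hk', getElem!_pos q k hk, getElem!_pos (p ++ q) _ hk',
    List.getElem_append_right (by omega)]
  simp

lemma IsInfImage.periodic_of_const {x : A} {t : ℕ → A} (hx : g x ≠ [])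
    (ht : IsInfImage (·.flatMap g) (fun _ => x) t) : Function.Periodic t (g x).length := by
  intro n
  have := congrFun (ht.unique (fun _ => hx) (ht.shift 1)) n
  simpa [add_comm] using this.symm

end InfiniteImages

section Words

variable {A : Type*}

lemma infFactor_ofFn (w : ℕ → A) (n : ℕ) : InfFactor (List.ofFn fun j : Fin n => w j) w :=
  ⟨0, by simp [OccursAt]⟩

lemma OccursAt.prefix_eq {w : ℕ → A} {n i : ℕ}
    (h : OccursAt (List.ofFn fun j : Fin n => w j) w i) {j : ℕ} (hj : j < n) :
    w j = w (i + j) := by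
  have := congrArg (·[j]?) h
  simpa [hj] using this

lemma periodic_of_occursAt_prefix {w : ℕ → A} {M P i : ℕ}
    (hper : ∀ n ≥ M, w (n + P) = w n) (hi : M ≤ i)
    (hocc : OccursAt (List.ofFn fun j : Fin (M + P) => w j) w i) : Function.Periodic w P := by
  intro n
  rcases le_or_gt M n with hn | hn
  · exact hper n hn
  · calc w (n + P) = w (i + (n + P)) := hocc.prefix_eq (by omega)
      _ = w (i + n) := by rw [← add_assoc, hper _ (by omega)]
      _ = w n := (hocc.prefix_eq (by omega)).symm

lemma eventually_periodic_of_suffix {s t w : ℕ → A} {Q P k : ℕ} (ht : Function.Periodic t P)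
    (hst : ∀ n, s (Q + n) = t n) (hw : ∀ n, w n = s (n + k)) :
    ∀ n ≥ Q - k, w (n + P) = w n := by
  intro n hn
  obtain ⟨m, hm⟩ : ∃ m, n + k = Q + m := ⟨n + k - Q, by omega⟩
  rw [hw, hw, add_right_comm, hm, add_assoc, hst, hst, ht]

lemma exists_eq_shift_of_periodic {s t w : ℕ → A} {Q P k : ℕ} (hP : 0 < P)
    (hst : ∀ n, s (Q + n) = t n) (hw : ∀ n, w n = s (n + k)) (hper : Function.Periodic w P) :
    ∃ k', ∀ n, w n = t (n + k') := by
  refine ⟨k + Q * P - Q, fun n => ?_⟩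
  have hQ : Q ≤ Q * P := Nat.le_mul_of_pos_right Q hP
  have hwQP : w (n + Q * P) = w n := by simpa using hper.nat_mul Q n
  rw [← hwQP, hw, ← hst]
  congr 1
  omega

end Words

theorem skew_word_not_recurrent_general {A : Type*} [DecidableEq A] [Inhabited A]
    (a b : A)
    (μ : List A → List A)
    (hμ : ∃ L : List Bool,
      μ = (L.map (fun t => if t then psiA a b else psiB a b)).foldr (· ∘ ·) id)
    (x y : A) (l : ℕ)
    (s t : ℕ → A)
    (hs : IsInfImage μ (fun n => if n < l then x else if n = l then y else x) s)
    (ht : IsInfImage μ (fun _ => x) t)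
    (w : ℕ → A)
    (hsuffix : ∃ k, ∀ n, w n = s (n + k))
    (hnot : ¬ ∃ k, ∀ n, w n = t (n + k)) :
    ∃ u : List A, InfFactor u w ∧ ∃ N : ℕ, ∀ i ≥ N, ¬ OccursAt u w i := by
  obtain ⟨g, hg, rfl⟩ : ∃ g : A → List A, (∀ c, g c ≠ []) ∧ μ = (·.flatMap g) := by
    obtain ⟨L, rfl⟩ := hμ
    exact exists_flatMap_eq_foldr_psi a b L
  have ht_per : Function.Periodic t (g x).length := ht.periodic_of_const (hg x)
  obtain ⟨Q, hst⟩ : ∃ Q, ∀ n, s (Q + n) = t n := ⟨_, congrFun <|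
    (hs.shift (l + 1)).unique (fun _ => hg _) <| by
      convert ht using 2 with n
      simp only [if_neg (show ¬ l + 1 + n < l by omega), if_neg (show l + 1 + n ≠ l by omega)]⟩
  obtain ⟨k, hw⟩ := hsuffix
  by_contra! hrec
  obtain ⟨i, hi, hocc⟩ := hrec _ (infFactor_ofFn w (Q - k + (g x).length)) (Q - k)
  exact hnot <| exists_eq_shift_of_periodic (List.length_pos_iff.mpr (hg x)) hst hw <|
    periodic_of_occursAt_prefix (eventually_periodic_of_suffix ht_per hst hw) hi hocc

theorem skew_word_not_recurrent {A : Type*} [DecidableEq A] [Inhabited A]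
    (a b : A) (hab : a ≠ b)
    (μ : List A → List A)
    (hμ : ∃ L : List Bool,
      μ = (L.map (fun t => if t then psiA a b else psiB a b)).foldr (· ∘ ·) id)
    (x y : A) (hxy : ({x, y} : Set A) = {a, b}) (l : ℕ)
    (s t : ℕ → A)
    (hs : IsInfImage μ (fun n => if n < l then x else if n = l then y else x) s)
    (ht : IsInfImage μ (fun _ => x) t)
    (w : ℕ → A)
    (hsuffix : ∃ k, ∀ n, w n = s (n + k))
    (hnot : ¬ ∃ k, ∀ n, w n = t (n + k)) :
    ∃ u : List A, InfFactor u w ∧ ∃ N : ℕ, ∀ i ≥ N, ¬ OccursAt u w i :=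
  skew_word_not_recurrent_general a b μ hμ x y l s t hs ht w hsuffix hnot
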